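/- In Strebel's chimney domain C: if I, J ⊂ ∂C are disjoint arcs of prime ends with mod Γ_{I,J} < ∞, then the moduli mod Γᵋ_{I₋,J₊} and mod Γᵋ_{I₊,J₋} are bounded in ε: there exists M < ∞ with mod Γᵋ_{I₋,J₊} ≤ M and mod Γᵋ_{I₊,J₋} ≤ M for all ε ∈ (0,1]. -/

import Mathlib

open MeasureTheory Set

noncomputable section

/-- A continuous, piecewise continuously differentiable curve parametrized by `[0,1]`. -/
structure PCurve where
  toFun : ℝ → ℂ
  continuousOn : ContinuousOn toFun (Set.Icc 0 1)
  exceptional : Finset ℝ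
  differentiableAt : ∀ t ∈ Set.Icc (0:ℝ) 1 \ (exceptional : Set ℝ), DifferentiableAt ℝ toFun t
  derivContinuousOn : ContinuousOn (deriv toFun) (Set.Icc (0:ℝ) 1 \ (exceptional : Set ℝ))

/-- The line integral `∫_γ ρ |dz|` of a nonnegative Borel function along a curve. -/
def curveLIntegral (ρ : ℂ → ENNReal) (γ : PCurve) : ENNReal :=
  ∫⁻ t in Set.Ioo (0:ℝ) 1, ρ (γ.toFun t) * ENNReal.ofReal ‖deriv γ.toFun t‖

/-- `ρ` is admissible for the curve family `Γ`. -/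
def IsAdmissible (ρ : ℂ → ENNReal) (Γ : Set PCurve) : Prop :=
  Measurable ρ ∧ ∀ γ ∈ Γ, 1 ≤ curveLIntegral ρ γ

/-- The conformal modulus of a family of curves. -/
def modulus (Γ : Set PCurve) : ENNReal :=
  ⨅ (ρ : ℂ → ENNReal) (_ : IsAdmissible ρ Γ), ∫⁻ z : ℂ, ρ z ^ 2

/-- The family `(E, F; Ω)` of curves with interior in `Ω`, one endpoint in `E` and
the other endpoint in `F`. -/
def connecting (E F Ω : Set ℂ) : Set PCurve :=
  {γ | (∀ t ∈ Set.Ioo (0:ℝ) 1, γ.toFun t ∈ Ω) ∧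
    ((γ.toFun 0 ∈ E ∧ γ.toFun 1 ∈ F) ∨ (γ.toFun 0 ∈ F ∧ γ.toFun 1 ∈ E))}

/-- A continuum: a compact connected set with more than one point. -/
def IsContinuum (E : Set ℂ) : Prop :=
  IsCompact E ∧ IsConnected E ∧ E.Nontrivial

/-- The distance between two sets. -/
def setDist (E F : Set ℂ) : ℝ :=
  sInf (Set.image2 dist E F)

/-- The relative distance `Δ(E,F) = dist(E,F) / min(diam E, diam F)`. -/
def relDist (E F : Set ℂ) : ℝ :=
  setDist E F / min (Metric.diam E) (Metric.diam F)

/-- Strebel's chimney domain `C = {Im z < 0} ∪ {|Re z| < 1}`. -/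
def chimney : Set ℂ := {z | z.im < 0} ∪ {z | |z.re| < 1}

/-- The vertical shrinking map `T_ε(x + iy) = x + iεy`. -/
def Teps (ε : ℝ) (z : ℂ) : ℂ := ⟨z.re, ε * z.im⟩

/-- `Γᵋ_{I,J} = (T_ε(I), T_ε(J); C)`. -/
def chimFam (ε : ℝ) (I J : Set ℂ) : Set PCurve :=
  connecting (Teps ε '' I) (Teps ε '' J) chimney

/-- The right boundary component `C₊ = [1,∞) ∪ {1 + iy : y ≥ 0}` of `∂C`. -/
def Cplus : Set ℂ := {z | (z.im = 0 ∧ 1 ≤ z.re) ∨ (z.re = 1 ∧ 0 ≤ z.im)}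

/-- The left boundary component `C₋ = (-∞,-1] ∪ {-1 + iy : y ≥ 0}` of `∂C`. -/
def Cminus : Set ℂ := {z | (z.im = 0 ∧ z.re ≤ -1) ∨ (z.re = -1 ∧ 0 ≤ z.im)}

/-- `I₀ = {1 + iy : y > 1}`. -/
def chimI0 : Set ℂ := {z | z.re = 1 ∧ 1 < z.im}

/-- `J₀ = (1,2) ⊂ ℝ`. -/
def chimJ0 : Set ℂ := {z | z.im = 0 ∧ 1 < z.re ∧ z.re < 2}

/-- Arclength parametrization of `C₊`: `t ≤ 0 ↦ 1 - t ∈ [1,∞)`, `t ≥ 0 ↦ 1 + it`. -/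
def gPlus (t : ℝ) : ℂ := if t ≤ 0 then ⟨1 - t, 0⟩ else ⟨1, t⟩

/-- Arclength parametrization of `C₋`: `t ≤ 0 ↦ -1 + t ∈ (-∞,-1]`, `t ≥ 0 ↦ -1 + it`. -/
def gMinus (t : ℝ) : ℂ := if t ≤ 0 then ⟨-1 + t, 0⟩ else ⟨-1, t⟩

/-- An arc of prime ends of `∂C`: a connected arc of the prime-end circle of the chimney
domain.  It is either an arc inside one boundary component, or an arc passing through the
top end of the chimney, or an arc passing through the bottom end (the point at infinity of
the lower half-plane), or an arc passing through both ends. -/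
def IsChimneyArc (A : Set ℂ) : Prop :=
  (∃ s : Set ℝ, s.OrdConnected ∧ A = gPlus '' s) ∨
  (∃ s : Set ℝ, s.OrdConnected ∧ A = gMinus '' s) ∨
  (∃ s t : Set ℝ, s.OrdConnected ∧ t.OrdConnected ∧ ¬BddAbove s ∧ ¬BddAbove t ∧
    A = gPlus '' s ∪ gMinus '' t) ∨
  (∃ s t : Set ℝ, s.OrdConnected ∧ t.OrdConnected ∧ ¬BddBelow s ∧ ¬BddBelow t ∧
    A = gPlus '' s ∪ gMinus '' t) ∨
  (∃ a b a' b' : ℝ,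
    A = gPlus '' (Set.Iio a ∪ Set.Ioi b) ∪ gMinus '' (Set.Iio a' ∪ Set.Ioi b'))

/-- `A` contains the top end of the chimney:
`{1 + iy : y > a} ∪ {-1 + iy : y > a} ⊆ A` for some `a > 0`. -/
def ContainsTopEnd (A : Set ℂ) : Prop :=
  ∃ a : ℝ, 0 < a ∧
    {z : ℂ | z.re = 1 ∧ a < z.im} ∪ {z : ℂ | z.re = -1 ∧ a < z.im} ⊆ A

/-- `A` contains a two-sided neighborhood of the corner `1`:
`{1 + iy : 0 < y < δ} ∪ (1, 1 + δ) ⊆ A` for some `δ > 0`. -/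
def CornerNbhdPlus (A : Set ℂ) : Prop :=
  ∃ δ : ℝ, 0 < δ ∧
    ({z : ℂ | z.re = 1 ∧ 0 < z.im ∧ z.im < δ} ∪
      {z : ℂ | z.im = 0 ∧ 1 < z.re ∧ z.re < 1 + δ}) ⊆ A

/-- `A` contains a two-sided neighborhood of the corner `-1`:
`(-1 - δ, -1) ∪ {-1 + iy : 0 < y < δ} ⊆ A` for some `δ > 0`. -/
def CornerNbhdMinus (A : Set ℂ) : Prop :=
  ∃ δ : ℝ, 0 < δ ∧
    ({z : ℂ | z.im = 0 ∧ -1 - δ < z.re ∧ z.re < -1} ∪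
      {z : ℂ | z.re = -1 ∧ 0 < z.im ∧ z.im < δ}) ⊆ A

/-!
Finiteness of `mod Γ_{I,J}` rules out two configurations. If `I` contained the left wall and `J`
the right wall of the chimney above some height `y₀`, the horizontal segments across the chimney
at heights `y ≥ y₀` would all lie in `Γ_{I,J}`; each forces `∫ ρ² ≥ 1/2` on its row, so the
modulus would be infinite. If `I` contained `(-∞, -x₀]` and `J` contained `[x₀, ∞)`, the lower
half circles `|z| = r > x₀` would force `∫ ρ² ≥ 1/(π r)` on each of them, which diverges after
integration in `r`. So one of `I₋, J₊` has a bounded vertical part and one has a bounded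
horizontal part, and since `T_ε` does not increase norms this persists uniformly in `ε`.

A curve of `Γᵋ_{I₋,J₊}` then meets a fixed disc `|z| ≤ R`: either one of its endpoints lies in
it, or it joins a far point of the real axis to a point of the upper half-plane and thus crosses
the opening `(-1, 1)` of the chimney. Its endpoints are `2` apart, so `ρ = 1/2` on the disc of
radius `R + 2` is admissible, and `mod Γᵋ_{I₋,J₊} ≤ π ((R + 2) / 2)²`. The family `Γᵋ_{I₊,J₋}`
is handled by exchanging `I` and `J`.
-/

open scoped ENNReal Real
open Bornology Filter Metric

theorem sq_lintegral_le_measure_univ_mul {α : Type*} [MeasurableSpace α] (μ : Measure α)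
    {f : α → ℝ≥0∞} (hf : AEMeasurable f μ) :
    (∫⁻ a, f a ∂μ) ^ 2 ≤ μ univ * ∫⁻ a, f a ^ 2 ∂μ := by
  have h := ENNReal.lintegral_mul_norm_pow_le (hf.pow_const 2)
    (aemeasurable_const (b := (1 : ℝ≥0∞))) (p := 1 / 2) (q := 1 / 2)
    (by norm_num) (by norm_num) (by norm_num)
  have hsqrt : ∀ x : ℝ≥0∞, (x ^ 2) ^ (1 / 2 : ℝ) = x := fun x => by
    rw [← ENNReal.rpow_natCast, ← ENNReal.rpow_mul]; norm_num
  simp only [hsqrt, ENNReal.one_rpow, mul_one, lintegral_const, one_mul] at h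
  calc (∫⁻ a, f a ∂μ) ^ 2
      ≤ ((∫⁻ a, f a ^ 2 ∂μ) ^ (1 / 2 : ℝ) * μ univ ^ (1 / 2 : ℝ)) ^ 2 := by gcongr
    _ = μ univ * ∫⁻ a, f a ^ 2 ∂μ := by
      rw [mul_pow, ← ENNReal.rpow_natCast, ← ENNReal.rpow_natCast, ← ENNReal.rpow_mul,
        ← ENNReal.rpow_mul]
      norm_num [mul_comm]

theorem lintegral_Ioo_comp_affine (g : ℝ → ℝ≥0∞) {a : ℝ} (ha : 0 < a) (b : ℝ) :
    ∫⁻ t in Ioo (0:ℝ) 1, g (a * t + b) = ENNReal.ofReal a⁻¹ * ∫⁻ x in Ioo b (a + b), g x := by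
  have h := lintegral_image_eq_lintegral_abs_deriv_mul (measurableSet_Ioo (a := (0:ℝ)) (b := 1))
    (f := fun t => a * t + b) (f' := fun _ => a)
    (fun t _ => ((hasDerivAt_id' t).const_mul a |>.add_const b).hasDerivWithinAt.congr_deriv
      (mul_one a)) (fun x _ y _ h => mul_left_cancel₀ ha.ne' (add_right_cancel h)) g
  rw [image_affine_Ioo ha, mul_zero, zero_add, mul_one, abs_of_pos ha,
    lintegral_const_mul' _ _ ENNReal.ofReal_ne_top] at h
  rw [h, ← mul_assoc, ← ENNReal.ofReal_mul (inv_nonneg.2 ha.le), inv_mul_cancel₀ ha.ne',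
    ENNReal.ofReal_one, one_mul]

theorem lintegral_Ioi_ofReal_inv_eq_top {a : ℝ} (ha : 0 ≤ a) :
    ∫⁻ x in Ioi a, ENNReal.ofReal x⁻¹ = ⊤ := by
  by_contra h
  refine not_integrableOn_Ioi_inv (a := a) ⟨measurable_inv.aestronglyMeasurable, ?_⟩
  rw [hasFiniteIntegral_iff_ofReal]
  · exact Ne.lt_top h
  · exact (ae_restrict_iff' measurableSet_Ioi).2
      (.of_forall fun x hx => inv_nonneg.2 (ha.trans hx.le))

theorem Complex.continuous_polarCoord_symm : Continuous Complex.polarCoord.symm := by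
  simp_rw [funext Complex.polarCoord_symm_apply]
  fun_prop

theorem Complex.lintegral_eq_lintegral_prod (g : ℂ → ℝ≥0∞) :
    ∫⁻ z, g z = ∫⁻ p : ℝ × ℝ, g ⟨p.1, p.2⟩ :=
  ((Complex.volume_preserving_equiv_real_prod.symm).lintegral_comp_emb
    Complex.measurableEquivRealProd.symm.measurableEmbedding g).symm

namespace PCurve

def ofHasDerivAt {f f' : ℝ → ℂ} (hf : ∀ t, HasDerivAt f (f' t) t) (hf' : Continuous f') :
    PCurve where
  toFun := f
  continuousOn := (continuous_iff_continuousAt.2 fun t => (hf t).continuousAt).continuousOn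
  exceptional := ∅
  differentiableAt t _ := (hf t).differentiableAt
  derivContinuousOn := by
    rw [show deriv f = f' from funext fun t => (hf t).deriv]
    exact hf'.continuousOn

theorem deriv_ofHasDerivAt {f f' : ℝ → ℂ} (hf : ∀ t, HasDerivAt f (f' t) t)
    (hf' : Continuous f') (t : ℝ) : deriv (ofHasDerivAt hf hf').toFun t = f' t :=
  (hf t).deriv

theorem ofReal_norm_sub_le_lintegral (γ : PCurve) {p q : ℝ} (hp : 0 ≤ p) (hpq : p ≤ q)
    (hq : q ≤ 1) :
    ENNReal.ofReal ‖γ.toFun q - γ.toFun p‖ ≤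
      ∫⁻ t in Ioo p q, ENNReal.ofReal ‖deriv γ.toFun t‖ := by
  by_cases htop : ∫⁻ t in Ioo p q, ENNReal.ofReal ‖deriv γ.toFun t‖ = ⊤
  · exact htop ▸ le_top
  have hint : IntegrableOn (deriv γ.toFun) (Ioo p q) :=
    ⟨(measurable_deriv _).aestronglyMeasurable, by
      simpa only [HasFiniteIntegral, ← ofReal_norm] using Ne.lt_top htop⟩
  have hsub : Icc p q ⊆ Icc 0 1 := Icc_subset_Icc hp hq
  have hFTC : ∫ t in p..q, deriv γ.toFun t = γ.toFun q - γ.toFun p := by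
    refine integral_eq_of_hasDerivAt_off_countable_of_le _ _ hpq
      γ.exceptional.countable_toSet (γ.continuousOn.mono hsub) (fun t ht => ?_) ?_
    · exact (γ.differentiableAt t ⟨hsub (Ioo_subset_Icc_self ht.1), ht.2⟩).hasDerivAt
    · rwa [intervalIntegrable_iff_integrableOn_Ioc_of_le hpq,
        integrableOn_Ioc_iff_integrableOn_Ioo]
  calc ENNReal.ofReal ‖γ.toFun q - γ.toFun p‖
      ≤ ENNReal.ofReal (∫ t in p..q, ‖deriv γ.toFun t‖) := by
        rw [← hFTC]
        exact ENNReal.ofReal_le_ofReal (intervalIntegral.norm_integral_le_integral_norm hpq)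
    _ = ∫⁻ t in Ioo p q, ENNReal.ofReal ‖deriv γ.toFun t‖ := by
        rw [intervalIntegral.integral_of_le hpq, integral_Ioc_eq_integral_Ioo,
          ofReal_integral_eq_lintegral_ofReal hint.norm (.of_forall fun _ => norm_nonneg _)]

theorem curveLIntegral_eq_mul_of_norm_deriv_eq (ρ : ℂ → ℝ≥0∞) (γ : PCurve) {c : ℝ}
    (hc : ∀ t ∈ Ioo (0:ℝ) 1, ‖deriv γ.toFun t‖ = c) :
    curveLIntegral ρ γ = ENNReal.ofReal c * ∫⁻ t in Ioo (0:ℝ) 1, ρ (γ.toFun t) := by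
  rw [curveLIntegral, ← lintegral_const_mul' _ _ ENNReal.ofReal_ne_top]
  exact setLIntegral_congr_fun measurableSet_Ioo fun t ht => by rw [hc t ht, mul_comm]

theorem one_le_mul_lintegral_sq {ρ : ℂ → ℝ≥0∞} (hρ : Measurable ρ) (γ : PCurve) {c : ℝ}
    (hc : ∀ t ∈ Ioo (0:ℝ) 1, ‖deriv γ.toFun t‖ = c) (h : 1 ≤ curveLIntegral ρ γ) :
    1 ≤ ENNReal.ofReal (c ^ 2) * ∫⁻ t in Ioo (0:ℝ) 1, ρ (γ.toFun t) ^ 2 := by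
  have hc0 : 0 ≤ c := hc 2⁻¹ ⟨by norm_num, by norm_num⟩ ▸ norm_nonneg _
  have hmeas : AEMeasurable (fun t => ρ (γ.toFun t)) (volume.restrict (Ioo (0:ℝ) 1)) :=
    hρ.comp_aemeasurable ((γ.continuousOn.mono Ioo_subset_Icc_self).aemeasurable
      measurableSet_Ioo)
  calc 1 ≤ curveLIntegral ρ γ ^ 2 := one_le_pow₀ h
    _ = ENNReal.ofReal c ^ 2 * (∫⁻ t in Ioo (0:ℝ) 1, ρ (γ.toFun t)) ^ 2 := by
      rw [curveLIntegral_eq_mul_of_norm_deriv_eq ρ γ hc, mul_pow]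
    _ ≤ ENNReal.ofReal c ^ 2 * (volume.restrict (Ioo (0:ℝ) 1) univ *
        ∫⁻ t in Ioo (0:ℝ) 1, ρ (γ.toFun t) ^ 2) := by
      gcongr
      exact sq_lintegral_le_measure_univ_mul _ hmeas
    _ = ENNReal.ofReal (c ^ 2) * ∫⁻ t in Ioo (0:ℝ) 1, ρ (γ.toFun t) ^ 2 := by
      rw [Measure.restrict_apply_univ, Real.volume_Ioo, ENNReal.ofReal_pow hc0]
      norm_num

end PCurve

theorem connecting_comm (E F Ω : Set ℂ) : connecting E F Ω = connecting F E Ω :=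
  Set.ext fun _ => and_congr_right' or_comm

theorem chimFam_comm (ε : ℝ) (A B : Set ℂ) : chimFam ε A B = chimFam ε B A :=
  connecting_comm _ _ _

open Complex in
def horizontalSegment (y : ℝ) : PCurve :=
  PCurve.ofHasDerivAt (f := fun t : ℝ => 2 * t - 1 + y * I) (f' := fun _ => 2)
    (fun t => by
      simpa using
        ((((hasDerivAt_id (t : ℝ)).ofReal_comp).const_mul (2 : ℂ)).sub_const 1).add_const (y * I))
    continuous_const

theorem horizontalSegment_apply (y t : ℝ) : (horizontalSegment y).toFun t = ⟨2 * t - 1, y⟩ := by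
  apply Complex.ext <;> simp [horizontalSegment, PCurve.ofHasDerivAt]

theorem norm_deriv_horizontalSegment (y t : ℝ) : ‖deriv (horizontalSegment y).toFun t‖ = 2 := by
  simp [horizontalSegment, PCurve.deriv_ofHasDerivAt]

open Complex in
def lowerSemicircle (r : ℝ) : PCurve :=
  PCurve.ofHasDerivAt (f := fun t : ℝ => r * exp (↑(π * t - π) * I))
    (f' := fun t => r * (exp (↑(π * t - π) * I) * (π * I)))
    (fun t => by
      simpa using ((((hasDerivAt_id (t : ℝ)).const_mul π).sub_const π).ofReal_comp.mul_const
        I).cexp.const_mul (r : ℂ))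
    (by fun_prop)

open Complex in
theorem lowerSemicircle_apply (r t : ℝ) :
    (lowerSemicircle r).toFun t = Complex.polarCoord.symm (r, π * t - π) := by
  rw [Complex.polarCoord_symm_apply, ofReal_cos, ofReal_sin, ← exp_mul_I]
  rfl

open Complex in
theorem norm_deriv_lowerSemicircle {r : ℝ} (hr : 0 ≤ r) (t : ℝ) :
    ‖deriv (lowerSemicircle r).toFun t‖ = π * r := by
  simp only [lowerSemicircle, PCurve.deriv_ofHasDerivAt, norm_mul, norm_exp_ofReal_mul_I,
    norm_I, norm_real, Real.norm_eq_abs, abs_of_nonneg hr, abs_of_pos Real.pi_pos]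
  ring

theorem im_lowerSemicircle_neg {r : ℝ} (hr : 0 < r) {t : ℝ} (ht : t ∈ Ioo (0:ℝ) 1) :
    ((lowerSemicircle r).toFun t).im < 0 := by
  rw [lowerSemicircle_apply, Complex.polarCoord_symm_apply]
  simp only [Complex.mul_im, Complex.add_im, Complex.ofReal_re, Complex.ofReal_im,
    Complex.I_re, Complex.I_im]
  have := Real.sin_neg_of_neg_of_neg_pi_lt (x := π * t - π) (by nlinarith [ht.2, Real.pi_pos])
    (by nlinarith [ht.1, Real.pi_pos])
  nlinarith

theorem one_le_mul_lintegral_sq_horizontal {ρ : ℂ → ℝ≥0∞} (hρ : Measurable ρ) (y : ℝ)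
    (h : 1 ≤ curveLIntegral ρ (horizontalSegment y)) :
    1 ≤ ENNReal.ofReal 2 * ∫⁻ x in Ioo (-1:ℝ) 1, ρ ⟨x, y⟩ ^ 2 := by
  have := (horizontalSegment y).one_le_mul_lintegral_sq hρ
    (fun t _ => norm_deriv_horizontalSegment y t) h
  simp_rw [horizontalSegment_apply, sub_eq_add_neg] at this
  rwa [lintegral_Ioo_comp_affine (fun x => ρ ⟨x, y⟩ ^ 2) two_pos, ← mul_assoc,
    ← ENNReal.ofReal_mul (by positivity), show (2:ℝ) + -1 = 1 by norm_num,
    show (2:ℝ) ^ 2 * 2⁻¹ = 2 by norm_num] at this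

theorem one_le_mul_lintegral_sq_lowerSemicircle {ρ : ℂ → ℝ≥0∞} (hρ : Measurable ρ) {r : ℝ}
    (hr : 0 ≤ r) (h : 1 ≤ curveLIntegral ρ (lowerSemicircle r)) :
    1 ≤ ENNReal.ofReal (π * r ^ 2) *
      ∫⁻ θ in Ioo (-π) 0, ρ (Complex.polarCoord.symm (r, θ)) ^ 2 := by
  have := (lowerSemicircle r).one_le_mul_lintegral_sq hρ
    (fun t _ => norm_deriv_lowerSemicircle hr t) h
  simp_rw [lowerSemicircle_apply, sub_eq_add_neg] at this
  rwa [lintegral_Ioo_comp_affine (fun θ => ρ (Complex.polarCoord.symm (r, θ)) ^ 2) Real.pi_pos,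
    ← mul_assoc, ← ENNReal.ofReal_mul (by positivity), add_neg_cancel,
    show (π * r) ^ 2 * π⁻¹ = π * r ^ 2 by field_simp] at this

theorem modulus_connecting_eq_top_of_horizontal {E F Ω : Set ℂ} {y₀ : ℝ}
    (hΩ : ∀ y ≥ y₀, ∀ x ∈ Ioo (-1:ℝ) 1, (⟨x, y⟩ : ℂ) ∈ Ω)
    (hE : ∀ y ≥ y₀, (⟨-1, y⟩ : ℂ) ∈ E) (hF : ∀ y ≥ y₀, (⟨1, y⟩ : ℂ) ∈ F) :
    modulus (connecting E F Ω) = ⊤ := by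
  simp only [modulus, iInf_eq_top]
  rintro ρ ⟨hρ, hadm⟩
  have hrow : ∀ y ∈ Ici y₀, 1 ≤ ENNReal.ofReal 2 * ∫⁻ x in Ioo (-1:ℝ) 1, ρ ⟨x, y⟩ ^ 2 := by
    refine fun y hy => one_le_mul_lintegral_sq_horizontal hρ y (hadm _ ⟨fun t ht => ?_, ?_⟩)
    · rw [horizontalSegment_apply]
      exact hΩ y hy _ ⟨by linarith [ht.1], by linarith [ht.2]⟩
    · exact .inl (by norm_num [horizontalSegment_apply]; exact ⟨hE y hy, hF y hy⟩)
  have hmeas : Measurable fun p : ℝ × ℝ => ρ ⟨p.1, p.2⟩ ^ 2 :=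
    (hρ.comp Complex.measurableEquivRealProd.symm.measurable).pow_const 2
  have htop : ⊤ ≤ ENNReal.ofReal 2 * ∫⁻ z, ρ z ^ 2 := calc
    ⊤ = ∫⁻ y in Ici y₀, 1 := by simp
    _ ≤ ∫⁻ y in Ici y₀, ENNReal.ofReal 2 * ∫⁻ x in Ioo (-1:ℝ) 1, ρ ⟨x, y⟩ ^ 2 :=
      setLIntegral_mono' measurableSet_Ici hrow
    _ = ENNReal.ofReal 2 * ∫⁻ p in Ioo (-1:ℝ) 1 ×ˢ Ici y₀, ρ ⟨p.1, p.2⟩ ^ 2 := by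
      rw [lintegral_const_mul' _ _ ENNReal.ofReal_ne_top, Measure.volume_eq_prod,
        setLIntegral_prod_symm _ hmeas.aemeasurable]
    _ ≤ ENNReal.ofReal 2 * ∫⁻ z, ρ z ^ 2 := by
      rw [Complex.lintegral_eq_lintegral_prod]
      exact mul_le_mul_right (setLIntegral_le_lintegral _ _) _
  simpa [ENNReal.mul_eq_top] using htop

theorem modulus_connecting_eq_top_of_semicircles {E F Ω : Set ℂ} {x₀ : ℝ} (hx₀ : 0 ≤ x₀)
    (hΩ : {z : ℂ | z.im < 0} ⊆ Ω) (hE : ∀ r > x₀, -(r : ℂ) ∈ E) (hF : ∀ r > x₀, (r : ℂ) ∈ F) :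
    modulus (connecting E F Ω) = ⊤ := by
  simp only [modulus, iInf_eq_top]
  rintro ρ ⟨hρ, hadm⟩
  have hrow : ∀ r ∈ Ioi x₀, 1 ≤ ENNReal.ofReal (π * r ^ 2) *
      ∫⁻ θ in Ioo (-π) 0, ρ (Complex.polarCoord.symm (r, θ)) ^ 2 := by
    refine fun r hr => one_le_mul_lintegral_sq_lowerSemicircle hρ (hx₀.trans hr.le)
      (hadm _ ⟨fun t ht => hΩ ?_, Or.inl ⟨?_, ?_⟩⟩)
    · exact im_lowerSemicircle_neg (hx₀.trans_lt hr) ht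
    · simpa [lowerSemicircle_apply] using hE r hr
    · simpa [lowerSemicircle_apply] using hF r hr
  have hmeas : Measurable fun p : ℝ × ℝ => ENNReal.ofReal p.1 * ρ (Complex.polarCoord.symm p) ^ 2 :=
    measurable_fst.ennreal_ofReal.mul
      ((hρ.comp Complex.continuous_polarCoord_symm.measurable).pow_const 2)
  have htarget : Ioi x₀ ×ˢ Ioo (-π) 0 ⊆ polarCoord.target :=
    fun p ⟨hr, hθ⟩ => ⟨hx₀.trans_lt hr, hθ.1, hθ.2.trans Real.pi_pos⟩
  refine top_unique ?_
  calc (⊤ : ℝ≥0∞) = ENNReal.ofReal π⁻¹ * ∫⁻ r in Ioi x₀, ENNReal.ofReal r⁻¹ := by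
        rw [lintegral_Ioi_ofReal_inv_eq_top hx₀, ENNReal.mul_top (by simp [Real.pi_pos])]
    _ = ∫⁻ r in Ioi x₀, ENNReal.ofReal (π⁻¹ * r⁻¹) * 1 := by
        simp_rw [mul_one, ENNReal.ofReal_mul (inv_nonneg.2 Real.pi_pos.le)]
        exact (lintegral_const_mul' _ _ ENNReal.ofReal_ne_top).symm
    _ ≤ ∫⁻ r in Ioi x₀, ENNReal.ofReal (π⁻¹ * r⁻¹) * (ENNReal.ofReal (π * r ^ 2) *
          ∫⁻ θ in Ioo (-π) 0, ρ (Complex.polarCoord.symm (r, θ)) ^ 2) :=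
        setLIntegral_mono' measurableSet_Ioi fun r hr => mul_le_mul_right (hrow r hr) _
    _ = ∫⁻ p in Ioi x₀ ×ˢ Ioo (-π) 0, ENNReal.ofReal p.1 * ρ (Complex.polarCoord.symm p) ^ 2 := by
        rw [Measure.volume_eq_prod, setLIntegral_prod _ hmeas.aemeasurable]
        refine setLIntegral_congr_fun measurableSet_Ioi fun r (hr : x₀ < r) => ?_
        have hr0 : 0 < r := hx₀.trans_lt hr
        rw [← mul_assoc, ← ENNReal.ofReal_mul (by positivity),
          show π⁻¹ * r⁻¹ * (π * r ^ 2) = r by field_simp,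
          ← lintegral_const_mul' _ _ ENNReal.ofReal_ne_top]
    _ ≤ ∫⁻ p in polarCoord.target, ENNReal.ofReal p.1 • ρ (Complex.polarCoord.symm p) ^ 2 :=
        lintegral_mono_set htarget
    _ = ∫⁻ z, ρ z ^ 2 := Complex.lintegral_comp_polarCoord_symm (fun z => ρ z ^ 2)

theorem exists_subarc_of_norm_le {f : ℝ → ℂ} (hf : ContinuousOn f (Icc 0 1)) {R d t₀ : ℝ}
    (ht₀ : t₀ ∈ Icc (0:ℝ) 1) (hft₀ : ‖f t₀‖ ≤ R) (hgap : d ≤ ‖f 1 - f 0‖) :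
    ∃ p q, 0 ≤ p ∧ p ≤ q ∧ q ≤ 1 ∧ (∀ t ∈ Ioo p q, ‖f t‖ ≤ R + d) ∧ d ≤ ‖f q - f p‖ := by
  by_cases h : ∀ t ∈ Icc (0:ℝ) 1, ‖f t‖ ≤ R + d
  · exact ⟨0, 1, le_rfl, zero_le_one, le_rfl, fun t ht => h t (Ioo_subset_Icc_self ht), hgap⟩
  obtain ⟨w, hw, hfw⟩ : ∃ w ∈ Icc (0:ℝ) 1, R + d < ‖f w‖ := by simpa [and_assoc] using h
  have hK : IsCompact (Icc (0:ℝ) 1 ∩ (fun t => ‖f t‖) ⁻¹' Ici (R + d)) :=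
    isCompact_Icc.of_isClosed_subset ((continuous_norm.comp_continuousOn hf)
      |>.preimage_isClosed_of_isClosed isClosed_Icc isClosed_Ici) inter_subset_left
  -- the exit parameter `q` closest to `t₀`: strictly between them the curve stays in the ball
  obtain ⟨q, ⟨hq, hfq : R + d ≤ ‖f q‖⟩, hmin⟩ := hK.exists_isMinOn ⟨w, hw, hfw.le⟩
    (continuous_abs.comp (continuous_id.sub continuous_const)).continuousOn
    (f := fun t => |t - t₀|)
  have hinside : ∀ t ∈ Icc (0:ℝ) 1, |t - t₀| < |q - t₀| → ‖f t‖ ≤ R + d := fun t ht hlt => by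
    by_contra! h
    exact (hmin ⟨ht, h.le⟩).not_gt hlt
  have hgap' : d ≤ ‖f q - f t₀‖ := by linarith [norm_sub_norm_le (f q) (f t₀)]
  rcases le_total t₀ q with h | h
  · refine ⟨t₀, q, ht₀.1, h, hq.2,
      fun t ht => hinside t ⟨ht₀.1.trans ht.1.le, ht.2.le.trans hq.2⟩ ?_, hgap'⟩
    rw [abs_of_pos (sub_pos.2 ht.1), abs_of_nonneg (sub_nonneg.2 h)]
    linarith [ht.2]
  · refine ⟨q, t₀, hq.1, h, ht₀.2,
      fun t ht => hinside t ⟨hq.1.trans ht.1.le, ht.2.le.trans ht₀.2⟩ ?_, by rwa [norm_sub_rev]⟩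
    rw [abs_of_neg (sub_neg.2 ht.2), abs_of_nonpos (sub_nonpos.2 h)]
    linarith [ht.1]

theorem one_le_curveLIntegral_indicator_closedBall {γ : PCurve} {p q r d : ℝ} (hd : 0 < d)
    (hp : 0 ≤ p) (hpq : p ≤ q) (hq : q ≤ 1) (hball : ∀ t ∈ Ioo p q, ‖γ.toFun t‖ ≤ r)
    (hgap : d ≤ ‖γ.toFun q - γ.toFun p‖) :
    1 ≤ curveLIntegral ((closedBall 0 r).indicator fun _ => (ENNReal.ofReal d)⁻¹) γ := by
  have hd' : ENNReal.ofReal d ≠ 0 := (ENNReal.ofReal_pos.2 hd).ne'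
  calc 1 = (ENNReal.ofReal d)⁻¹ * ENNReal.ofReal d :=
        (ENNReal.inv_mul_cancel hd' ENNReal.ofReal_ne_top).symm
    _ ≤ (ENNReal.ofReal d)⁻¹ * ∫⁻ t in Ioo p q, ENNReal.ofReal ‖deriv γ.toFun t‖ := by
      gcongr
      exact (ENNReal.ofReal_le_ofReal hgap).trans (γ.ofReal_norm_sub_le_lintegral hp hpq hq)
    _ = ∫⁻ t in Ioo p q, (closedBall 0 r).indicator (fun _ => (ENNReal.ofReal d)⁻¹)
          (γ.toFun t) * ENNReal.ofReal ‖deriv γ.toFun t‖ := by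
      rw [← lintegral_const_mul' _ _ (ENNReal.inv_ne_top.2 hd')]
      refine setLIntegral_congr_fun measurableSet_Ioo fun t ht => ?_
      rw [indicator_of_mem (mem_closedBall_zero_iff.2 (hball t ht))]
    _ ≤ curveLIntegral ((closedBall 0 r).indicator fun _ => (ENNReal.ofReal d)⁻¹) γ :=
      lintegral_mono_set (Ioo_subset_Ioo hp hq)

theorem modulus_le_of_forall_exists_norm_le {Γ : Set PCurve} {R d : ℝ} (hR : 0 ≤ R) (hd : 0 < d)
    (h : ∀ γ ∈ Γ, (∃ t ∈ Icc (0:ℝ) 1, ‖γ.toFun t‖ ≤ R) ∧ d ≤ ‖γ.toFun 1 - γ.toFun 0‖) :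
    modulus Γ ≤ ENNReal.ofReal (π * ((R + d) / d) ^ 2) := by
  set ρ := (closedBall (0:ℂ) (R + d)).indicator fun _ => (ENNReal.ofReal d)⁻¹
  have hadm : IsAdmissible ρ Γ := by
    refine ⟨measurable_const.indicator measurableSet_closedBall, fun γ hγ => ?_⟩
    obtain ⟨⟨t₀, ht₀, hR₀⟩, hgap⟩ := h γ hγ
    obtain ⟨p, q, hp, hpq, hq, hball, hgap'⟩ :=
      exists_subarc_of_norm_le γ.continuousOn ht₀ hR₀ hgap
    exact one_le_curveLIntegral_indicator_closedBall hd hp hpq hq hball hgap'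
  have hρ : ∀ z, ρ z ^ 2 = (closedBall (0:ℂ) (R + d)).indicator
      (fun _ => (ENNReal.ofReal d)⁻¹ ^ 2) z := fun z => by
    by_cases hz : z ∈ closedBall (0:ℂ) (R + d) <;> simp [ρ, hz]
  calc modulus Γ ≤ ∫⁻ z, ρ z ^ 2 := iInf₂_le ρ hadm
    _ = ENNReal.ofReal (π * ((R + d) / d) ^ 2) := by
      rw [lintegral_congr hρ, lintegral_indicator_const measurableSet_closedBall,
        Complex.volume_closedBall, ← ENNReal.ofReal_coe_nnreal, NNReal.coe_real_pi,
        ← ENNReal.ofReal_inv_of_pos hd, ← ENNReal.ofReal_pow (by positivity),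
        ← ENNReal.ofReal_pow (by positivity), ← ENNReal.ofReal_mul (by positivity),
        ← ENNReal.ofReal_mul (by positivity)]
      congr 1
      field_simp

theorem re_le_neg_one_of_mem_Cminus {z : ℂ} (hz : z ∈ Cminus) : z.re ≤ -1 := by
  rcases hz with ⟨-, h⟩ | ⟨h, -⟩ <;> linarith

theorem im_nonneg_of_mem_Cminus {z : ℂ} (hz : z ∈ Cminus) : 0 ≤ z.im := by
  rcases hz with ⟨h, -⟩ | ⟨-, h⟩ <;> linarith

theorem one_le_re_of_mem_Cplus {z : ℂ} (hz : z ∈ Cplus) : 1 ≤ z.re := by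
  rcases hz with ⟨-, h⟩ | ⟨h, -⟩ <;> linarith

theorem im_nonneg_of_mem_Cplus {z : ℂ} (hz : z ∈ Cplus) : 0 ≤ z.im := by
  rcases hz with ⟨h, -⟩ | ⟨-, h⟩ <;> linarith

theorem ContinuousOn.exists_mem_Ioo_mem_of_isOpen {f : ℝ → ℂ} (hf : ContinuousOn f (Icc 0 1))
    {u : ℝ} (hu : u ∈ Icc (0:ℝ) 1) {U : Set ℂ} (hU : IsOpen U) (hfu : f u ∈ U) :
    ∃ s ∈ Ioo (0:ℝ) 1, f s ∈ U := by
  have := ((hf u hu).mono Ioo_subset_Icc_self).mem_closure_image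
    (by rwa [closure_Ioo zero_ne_one])
  obtain ⟨_, hU', s, hs, rfl⟩ := mem_closure_iff.1 this U hU hfu
  exact ⟨s, hs, hU'⟩

theorem exists_norm_le_one_of_mem_chimney {f : ℝ → ℂ} (hf : ContinuousOn f (Icc 0 1))
    (hC : ∀ t ∈ Ioo (0:ℝ) 1, f t ∈ chimney) {u v : ℝ} (hu : u ∈ Icc (0:ℝ) 1)
    (hv : v ∈ Icc (0:ℝ) 1) (hu_re : 1 < |(f u).re|)
    (hv_im : 0 < (f v).im) : ∃ t ∈ Ioo (0:ℝ) 1, ‖f t‖ ≤ 1 := by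
  obtain ⟨s, hs, hs_re : 1 < |(f s).re|⟩ := hf.exists_mem_Ioo_mem_of_isOpen hu
    (isOpen_lt continuous_const (continuous_abs.comp Complex.continuous_re)) hu_re
  obtain ⟨s', hs', hs'_im : 0 < (f s').im⟩ := hf.exists_mem_Ioo_mem_of_isOpen hv
    (isOpen_lt continuous_const Complex.continuous_im) hv_im
  have hs_im : (f s).im < 0 := (hC s hs).resolve_right (not_lt.2 hs_re.le)
  have hsub : uIcc s s' ⊆ Ioo 0 1 := ordConnected_Ioo.uIcc_subset hs hs'
  obtain ⟨t, ht, ht_im : (f t).im = 0⟩ := intermediate_value_uIcc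
    (Complex.continuous_im.comp_continuousOn (hf.mono (hsub.trans Ioo_subset_Icc_self)))
    (mem_uIcc.2 (.inl ⟨hs_im.le, hs'_im.le⟩))
  have ht_re : |(f t).re| < 1 := (hC t (hsub ht)).resolve_left ht_im.not_lt
  exact ⟨t, hsub ht, (Complex.abs_re_eq_norm.2 ht_im) ▸ ht_re.le⟩

theorem exists_norm_le_of_mem_connecting {E F : Set ℂ} (hE : ∀ z ∈ E, 0 ≤ z.im)
    (hF : ∀ z ∈ F, 0 ≤ z.im) {R : ℝ} (hR : 1 ≤ R)
    (hcol : E ∩ {z | 0 < z.im} ⊆ closedBall 0 R ∨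
      F ∩ {z | 0 < z.im} ⊆ closedBall 0 R)
    (hray : E ∩ {z | z.im = 0} ⊆ closedBall 0 R ∨
      F ∩ {z | z.im = 0} ⊆ closedBall 0 R)
    {γ : PCurve} (hγ : γ ∈ connecting E F chimney) :
    ∃ t ∈ Icc (0:ℝ) 1, ‖γ.toFun t‖ ≤ R := by
  obtain ⟨u, hu, v, hv, huE, hvF⟩ :
      ∃ u ∈ Icc (0:ℝ) 1, ∃ v ∈ Icc (0:ℝ) 1, γ.toFun u ∈ E ∧ γ.toFun v ∈ F := by
    rcases hγ.2 with h | h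
    exacts [⟨0, left_mem_Icc.2 zero_le_one, 1, right_mem_Icc.2 zero_le_one, h⟩,
      ⟨1, right_mem_Icc.2 zero_le_one, 0, left_mem_Icc.2 zero_le_one, h.symm⟩]
  by_contra! hfar
  have hmem : ∀ {w : ℝ} {S : Set ℂ}, w ∈ Icc (0:ℝ) 1 → γ.toFun w ∈ S →
      S ⊆ closedBall 0 R → False := fun hw hS hSR =>
    (hfar _ hw).not_ge (mem_closedBall_zero_iff.1 (hSR hS))
  have hcross : ∀ {w w'}, w ∈ Icc (0:ℝ) 1 → w' ∈ Icc (0:ℝ) 1 → (γ.toFun w).im = 0 →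
      0 < (γ.toFun w').im → False := fun hw hw' him him' => by
    obtain ⟨t, ht, ht1⟩ := exists_norm_le_one_of_mem_chimney γ.continuousOn hγ.1 hw hw'
      (by rw [Complex.abs_re_eq_norm.2 him]; linarith [hfar _ hw]) him'
    linarith [hfar t (Ioo_subset_Icc_self ht)]
  rcases (hE _ huE).eq_or_lt with hu0 | hu0 <;> rcases (hF _ hvF).eq_or_lt with hv0 | hv0
  · exact hray.elim (hmem hu ⟨huE, hu0.symm⟩) (hmem hv ⟨hvF, hv0.symm⟩)
  · exact hcross hu hv hu0.symm hv0
  · exact hcross hv hu hv0.symm hu0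
  · exact hcol.elim (hmem hu ⟨huE, hu0⟩) (hmem hv ⟨hvF, hv0⟩)

theorem norm_Teps_le {ε : ℝ} (hε : |ε| ≤ 1) (z : ℂ) : ‖Teps ε z‖ ≤ ‖z‖ := by
  rw [← sq_le_sq₀ (norm_nonneg _) (norm_nonneg _), Complex.sq_norm, Complex.sq_norm,
    Complex.normSq_apply, Complex.normSq_apply]
  have : ε ^ 2 ≤ 1 := by rw [sq_le_one_iff_abs_le_one]; exact hε
  simp only [Teps]
  nlinarith [sq_nonneg z.im]

theorem Teps_mapsTo_Cminus {ε : ℝ} (hε : 0 ≤ ε) : MapsTo (Teps ε) Cminus Cminus := by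
  rintro z (⟨him, hre⟩ | ⟨hre, him⟩)
  exacts [.inl ⟨by simp [Teps, him], hre⟩, .inr ⟨hre, mul_nonneg hε him⟩]

theorem Teps_mapsTo_Cplus {ε : ℝ} (hε : 0 ≤ ε) : MapsTo (Teps ε) Cplus Cplus := by
  rintro z (⟨him, hre⟩ | ⟨hre, him⟩)
  exacts [.inl ⟨by simp [Teps, him], hre⟩, .inr ⟨hre, mul_nonneg hε him⟩]

theorem image_Teps_inter_subset_closedBall {ε R : ℝ} (hε : |ε| ≤ 1) {A S : Set ℂ}
    (hS : Teps ε ⁻¹' S ⊆ S) (hA : A ∩ S ⊆ closedBall 0 R) :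
    Teps ε '' A ∩ S ⊆ closedBall 0 R := by
  rintro _ ⟨⟨z, hz, rfl⟩, hzS⟩
  exact mem_closedBall_zero_iff.2 ((norm_Teps_le hε z).trans
    (mem_closedBall_zero_iff.1 (hA ⟨hz, hS hzS⟩)))

theorem modulus_connecting_chimney_le {E F : Set ℂ} (hE : E ⊆ Cminus) (hF : F ⊆ Cplus)
    {R : ℝ} (hR : 1 ≤ R)
    (hcol : E ∩ {z | 0 < z.im} ⊆ closedBall 0 R ∨
      F ∩ {z | 0 < z.im} ⊆ closedBall 0 R)
    (hray : E ∩ {z | z.im = 0} ⊆ closedBall 0 R ∨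
      F ∩ {z | z.im = 0} ⊆ closedBall 0 R) :
    modulus (connecting E F chimney) ≤ ENNReal.ofReal (π * ((R + 2) / 2) ^ 2) := by
  refine modulus_le_of_forall_exists_norm_le (by linarith) two_pos fun γ hγ =>
    ⟨exists_norm_le_of_mem_connecting (fun z hz => im_nonneg_of_mem_Cminus (hE hz))
      (fun z hz => im_nonneg_of_mem_Cplus (hF hz)) hR hcol hray hγ, ?_⟩
  refine le_trans ?_ (Complex.abs_re_le_norm _)
  rw [Complex.sub_re, le_abs]
  rcases hγ.2 with ⟨h0, h1⟩ | ⟨h0, h1⟩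
  · exact .inl (by linarith [re_le_neg_one_of_mem_Cminus (hE h0), one_le_re_of_mem_Cplus (hF h1)])
  · exact .inr (by linarith [re_le_neg_one_of_mem_Cminus (hE h1), one_le_re_of_mem_Cplus (hF h0)])

theorem modulus_chimFam_le {A B : Set ℂ} (hA : A ⊆ Cminus) (hB : B ⊆ Cplus) {R : ℝ}
    (hR : 1 ≤ R)
    (hcol : A ∩ {z | 0 < z.im} ⊆ closedBall 0 R ∨
      B ∩ {z | 0 < z.im} ⊆ closedBall 0 R)
    (hray : A ∩ {z | z.im = 0} ⊆ closedBall 0 R ∨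
      B ∩ {z | z.im = 0} ⊆ closedBall 0 R)
    {ε : ℝ} (hε : 0 < ε) (hε₁ : ε ≤ 1) :
    modulus (chimFam ε A B) ≤ ENNReal.ofReal (π * ((R + 2) / 2) ^ 2) := by
  have hε' : |ε| ≤ 1 := abs_le.2 ⟨by linarith, hε₁⟩
  have hpos : Teps ε ⁻¹' {z | 0 < z.im} ⊆ {z | 0 < z.im} := fun z hz =>
    pos_of_mul_pos_right (hz : 0 < ε * z.im) hε.le
  have hzero : Teps ε ⁻¹' {z | z.im = 0} ⊆ {z | z.im = 0} := fun z hz =>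
    (mul_eq_zero.1 (hz : ε * z.im = 0)).resolve_left hε.ne'
  exact modulus_connecting_chimney_le ((Teps_mapsTo_Cminus hε.le).mono_left hA).image_subset
    ((Teps_mapsTo_Cplus hε.le).mono_left hB).image_subset hR
    (hcol.imp (image_Teps_inter_subset_closedBall hε' hpos)
      (image_Teps_inter_subset_closedBall hε' hpos))
    (hray.imp (image_Teps_inter_subset_closedBall hε' hzero)
      (image_Teps_inter_subset_closedBall hε' hzero))

theorem re_gMinus_le (t : ℝ) : (gMinus t).re ≤ -1 := by
  unfold gMinus
  split_ifs with h
  exacts [by simpa using h, le_rfl]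

theorem one_le_re_gPlus (t : ℝ) : 1 ≤ (gPlus t).re := by
  unfold gPlus
  split_ifs with h
  exacts [by simpa using h, le_rfl]

theorem gMinus_of_nonneg {t : ℝ} (ht : 0 ≤ t) : gMinus t = ⟨-1, t⟩ := by
  unfold gMinus
  split_ifs with h
  · obtain rfl := le_antisymm h ht
    simp
  · rfl

theorem gPlus_of_nonneg {t : ℝ} (ht : 0 ≤ t) : gPlus t = ⟨1, t⟩ := by
  unfold gPlus
  split_ifs with h
  · obtain rfl := le_antisymm h ht
    simp
  · rfl

theorem gMinus_of_nonpos {t : ℝ} (ht : t ≤ 0) : gMinus t = ((-1 + t : ℝ) : ℂ) := if_pos ht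

theorem gPlus_of_nonpos {t : ℝ} (ht : t ≤ 0) : gPlus t = ((1 - t : ℝ) : ℂ) := if_pos ht

theorem gMinus_re_add_one_add_im {z : ℂ} (hz : z ∈ Cminus) : gMinus (z.re + 1 + z.im) = z := by
  rcases hz with ⟨him, hre⟩ | ⟨hre, him⟩
  · rw [him, add_zero, gMinus_of_nonpos (by linarith)]
    apply Complex.ext <;> simp [him]
  · rw [hre, neg_add_cancel, zero_add, gMinus_of_nonneg him]
    exact Complex.ext hre.symm rfl

theorem gPlus_one_sub_re_add_im {z : ℂ} (hz : z ∈ Cplus) : gPlus (1 - z.re + z.im) = z := by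
  rcases hz with ⟨him, hre⟩ | ⟨hre, him⟩
  · rw [him, add_zero, gPlus_of_nonpos (by linarith)]
    apply Complex.ext <;> simp [him]
  · rw [hre, sub_self, zero_add, gPlus_of_nonneg him]
    exact Complex.ext hre.symm rfl

theorem gMinus_injective : Function.Injective gMinus :=
  Function.LeftInverse.injective (g := fun z => z.re + 1 + z.im) fun t => by
    unfold gMinus; split_ifs <;> simp

theorem gPlus_injective : Function.Injective gPlus :=
  Function.LeftInverse.injective (g := fun z => 1 - z.re + z.im) fun t => by
    unfold gPlus; split_ifs <;> simp

theorem preimage_gMinus_image_gPlus (s : Set ℝ) : gMinus ⁻¹' (gPlus '' s) = ∅ :=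
  eq_empty_of_forall_notMem fun t ⟨u, _, h⟩ => by
    linarith [re_gMinus_le t, one_le_re_gPlus u, congrArg Complex.re h]

theorem preimage_gPlus_image_gMinus (s : Set ℝ) : gPlus ⁻¹' (gMinus '' s) = ∅ :=
  eq_empty_of_forall_notMem fun t ⟨u, _, h⟩ => by
    linarith [re_gMinus_le u, one_le_re_gPlus t, congrArg Complex.re h]

theorem IsChimneyArc.preimage_gMinus {A : Set ℂ} (hA : IsChimneyArc A) :
    (gMinus ⁻¹' A).OrdConnected ∨ ∃ a b, gMinus ⁻¹' A = Iio a ∪ Ioi b := by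
  rcases hA with ⟨s, -, rfl⟩ | ⟨s, hs, rfl⟩ | ⟨s, t, -, ht, -, -, rfl⟩ |
    ⟨s, t, -, ht, -, -, rfl⟩ | ⟨a, b, a', b', rfl⟩ <;>
  simp only [preimage_union, preimage_gMinus_image_gPlus, gMinus_injective.preimage_image,
    empty_union]
  exacts [.inl ordConnected_empty, .inl hs, .inl ht, .inl ht, .inr ⟨a', b', rfl⟩]

theorem IsChimneyArc.preimage_gPlus {A : Set ℂ} (hA : IsChimneyArc A) :
    (gPlus ⁻¹' A).OrdConnected ∨ ∃ a b, gPlus ⁻¹' A = Iio a ∪ Ioi b := by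
  rcases hA with ⟨s, hs, rfl⟩ | ⟨s, -, rfl⟩ | ⟨s, t, hs, -, -, -, rfl⟩ |
    ⟨s, t, hs, -, -, -, rfl⟩ | ⟨a, b, a', b', rfl⟩ <;>
  simp only [preimage_union, preimage_gPlus_image_gMinus, gPlus_injective.preimage_image,
    union_empty]
  exacts [.inl hs, .inl ordConnected_empty, .inl hs, .inl hs, .inr ⟨a, b, rfl⟩]

theorem exists_Ici_subset_of_not_bddAbove {s : Set ℝ}
    (hs : s.OrdConnected ∨ ∃ a b, s = Iio a ∪ Ioi b) (h : ¬BddAbove s) : ∃ a, Ici a ⊆ s := by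
  rcases hs with hs | ⟨a, b, rfl⟩
  · obtain ⟨x, hx⟩ := not_bddAbove_iff.1 h 0 |>.imp fun _ => And.left
    refine ⟨x, fun y hy => ?_⟩
    obtain ⟨z, hz, hyz⟩ := not_bddAbove_iff.1 h y
    exact hs.out hx hz ⟨hy, hyz.le⟩
  · exact ⟨b + 1, fun y hy => .inr (show b < y by linarith [mem_Ici.1 hy])⟩

theorem exists_Iic_subset_of_not_bddBelow {s : Set ℝ}
    (hs : s.OrdConnected ∨ ∃ a b, s = Iio a ∪ Ioi b) (h : ¬BddBelow s) : ∃ a, Iic a ⊆ s := by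
  rcases hs with hs | ⟨a, b, rfl⟩
  · obtain ⟨x, hx⟩ := not_bddBelow_iff.1 h 0 |>.imp fun _ => And.left
    refine ⟨x, fun y hy => ?_⟩
    obtain ⟨z, hz, hzy⟩ := not_bddBelow_iff.1 h y
    exact hs.out hz hx ⟨hzy.le, hy⟩
  · exact ⟨a - 1, fun y hy => .inl (show y < a by linarith [mem_Iic.1 hy])⟩

theorem isBounded_inter_Cminus_im_pos {A : Set ℂ} (h : BddAbove (gMinus ⁻¹' A)) :
    IsBounded (A ∩ Cminus ∩ {z | 0 < z.im}) := by
  obtain ⟨B, hB⟩ := h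
  refine isBounded_iff_forall_norm_le.2 ⟨1 + B, ?_⟩
  rintro z ⟨⟨hzA, hz⟩, him : 0 < z.im⟩
  have hre : z.re = -1 := (hz.resolve_left fun h => him.ne' h.1).1
  have hB' : z.re + 1 + z.im ≤ B := hB (by rwa [mem_preimage, gMinus_re_add_one_add_im hz])
  calc ‖z‖ ≤ |z.re| + |z.im| := Complex.norm_le_abs_re_add_abs_im z
    _ = 1 + (z.re + 1 + z.im) := by rw [hre, abs_of_pos him]; norm_num
    _ ≤ 1 + B := by linarith

theorem isBounded_inter_Cminus_im_eq_zero {A : Set ℂ} (h : BddBelow (gMinus ⁻¹' A)) :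
    IsBounded (A ∩ Cminus ∩ {z | z.im = 0}) := by
  obtain ⟨B, hB⟩ := h
  refine isBounded_iff_forall_norm_le.2 ⟨1 - B, ?_⟩
  rintro z ⟨⟨hzA, hz⟩, him : z.im = 0⟩
  have hB' : B ≤ z.re + 1 + z.im := hB (by rwa [mem_preimage, gMinus_re_add_one_add_im hz])
  rw [← Complex.abs_re_eq_norm.2 him, abs_of_neg (by linarith [re_le_neg_one_of_mem_Cminus hz])]
  linarith

theorem isBounded_inter_Cplus_im_pos {A : Set ℂ} (h : BddAbove (gPlus ⁻¹' A)) :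
    IsBounded (A ∩ Cplus ∩ {z | 0 < z.im}) := by
  obtain ⟨B, hB⟩ := h
  refine isBounded_iff_forall_norm_le.2 ⟨1 + B, ?_⟩
  rintro z ⟨⟨hzA, hz⟩, him : 0 < z.im⟩
  have hre : z.re = 1 := (hz.resolve_left fun h => him.ne' h.1).1
  have hB' : 1 - z.re + z.im ≤ B := hB (by rwa [mem_preimage, gPlus_one_sub_re_add_im hz])
  calc ‖z‖ ≤ |z.re| + |z.im| := Complex.norm_le_abs_re_add_abs_im z
    _ = 1 + (1 - z.re + z.im) := by rw [hre, abs_of_pos him]; norm_num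
    _ ≤ 1 + B := by linarith

theorem isBounded_inter_Cplus_im_eq_zero {A : Set ℂ} (h : BddBelow (gPlus ⁻¹' A)) :
    IsBounded (A ∩ Cplus ∩ {z | z.im = 0}) := by
  obtain ⟨B, hB⟩ := h
  refine isBounded_iff_forall_norm_le.2 ⟨1 - B, ?_⟩
  rintro z ⟨⟨hzA, hz⟩, him : z.im = 0⟩
  have hB' : B ≤ 1 - z.re + z.im := hB (by rwa [mem_preimage, gPlus_one_sub_re_add_im hz])
  rw [← Complex.abs_re_eq_norm.2 him, abs_of_pos (by linarith [one_le_re_of_mem_Cplus hz])]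
  linarith

theorem bddAbove_preimage_gMinus_or_gPlus {I J : Set ℂ} (hI : IsChimneyArc I)
    (hJ : IsChimneyArc J) (hfin : modulus (connecting I J chimney) ≠ ⊤) :
    BddAbove (gMinus ⁻¹' I) ∨ BddAbove (gPlus ⁻¹' J) := by
  by_contra! h
  obtain ⟨a, ha⟩ := exists_Ici_subset_of_not_bddAbove hI.preimage_gMinus h.1
  obtain ⟨b, hb⟩ := exists_Ici_subset_of_not_bddAbove hJ.preimage_gPlus h.2
  refine hfin (modulus_connecting_eq_top_of_horizontal (y₀ := max 0 (max a b))
    (fun _ _ x hx => .inr (abs_lt.2 hx)) (fun y hy => ?_) (fun y hy => ?_))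
  · rw [← gMinus_of_nonneg (le_of_max_le_left hy)]
    exact ha (le_of_max_le_left (le_of_max_le_right hy))
  · rw [← gPlus_of_nonneg (le_of_max_le_left hy)]
    exact hb (le_of_max_le_right (le_of_max_le_right hy))

theorem bddBelow_preimage_gMinus_or_gPlus {I J : Set ℂ} (hI : IsChimneyArc I)
    (hJ : IsChimneyArc J) (hfin : modulus (connecting I J chimney) ≠ ⊤) :
    BddBelow (gMinus ⁻¹' I) ∨ BddBelow (gPlus ⁻¹' J) := by
  by_contra! h
  obtain ⟨a, ha⟩ := exists_Iic_subset_of_not_bddBelow hI.preimage_gMinus h.1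
  obtain ⟨b, hb⟩ := exists_Iic_subset_of_not_bddBelow hJ.preimage_gPlus h.2
  refine hfin (modulus_connecting_eq_top_of_semicircles (x₀ := max 1 (max (1 - a) (1 - b)))
    (by positivity) (fun _ hz => .inl hz) (fun r hr => ?_) (fun r hr => ?_))
  all_goals simp only [gt_iff_lt, max_lt_iff] at hr
  · have := ha (show 1 - r ≤ a by linarith [hr.2.1])
    rwa [mem_preimage, gMinus_of_nonpos (by linarith [hr.1]), show -1 + (1 - r) = -r by ring,
      Complex.ofReal_neg] at this
  · have := hb (show 1 - r ≤ b by linarith [hr.2.2])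
    rwa [mem_preimage, gPlus_of_nonpos (by linarith [hr.1]), sub_sub_cancel] at this

theorem isBounded_or_of_modulus_ne_top {I J : Set ℂ} (hI : IsChimneyArc I) (hJ : IsChimneyArc J)
    (hfin : modulus (connecting I J chimney) ≠ ⊤) :
    (IsBounded (I ∩ Cminus ∩ {z | 0 < z.im}) ∨ IsBounded (J ∩ Cplus ∩ {z | 0 < z.im})) ∧
      (IsBounded (I ∩ Cminus ∩ {z | z.im = 0}) ∨ IsBounded (J ∩ Cplus ∩ {z | z.im = 0})) :=
  ⟨(bddAbove_preimage_gMinus_or_gPlus hI hJ hfin).imp isBounded_inter_Cminus_im_pos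
      isBounded_inter_Cplus_im_pos,
    (bddBelow_preimage_gMinus_or_gPlus hI hJ hfin).imp isBounded_inter_Cminus_im_eq_zero
      isBounded_inter_Cplus_im_eq_zero⟩

theorem eventually_subset_closedBall_or {s t : Set ℂ} (h : IsBounded s ∨ IsBounded t) :
    ∀ᶠ R in atTop, s ⊆ closedBall 0 R ∨ t ⊆ closedBall 0 R := by
  have key : ∀ {u : Set ℂ}, IsBounded u → ∀ᶠ R in atTop, u ⊆ closedBall 0 R :=
    fun hu => by
      obtain ⟨C, hC⟩ := isBounded_iff_forall_norm_le.1 hu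
      exact (eventually_ge_atTop C).mono fun R hR z hz =>
        mem_closedBall_zero_iff.2 ((hC z hz).trans hR)
  exact h.elim (fun hs => (key hs).mono fun _ => .inl) (fun ht => (key ht).mono fun _ => .inr)

theorem chimney_modulus_opposite_bounded_general (I J : Set ℂ)
    (hI : IsChimneyArc I) (hJ : IsChimneyArc J)
    (hfin : modulus (connecting I J chimney) ≠ ⊤) :
    ∃ M : ℝ, ∀ ε : ℝ, 0 < ε → ε ≤ 1 →
      modulus (chimFam ε (I ∩ Cminus) (J ∩ Cplus)) ≤ ENNReal.ofReal M ∧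
      modulus (chimFam ε (I ∩ Cplus) (J ∩ Cminus)) ≤ ENNReal.ofReal M := by
  obtain ⟨hcol, hray⟩ := isBounded_or_of_modulus_ne_top hI hJ hfin
  obtain ⟨hcol', hray'⟩ :=
    isBounded_or_of_modulus_ne_top hJ hI (by rwa [connecting_comm] at hfin)
  obtain ⟨R, hR, h₁, h₂, h₃, h₄⟩ := ((eventually_ge_atTop 1).and <|
    (eventually_subset_closedBall_or hcol).and <| (eventually_subset_closedBall_or hray).and <|
    (eventually_subset_closedBall_or hcol').and (eventually_subset_closedBall_or hray')).exists
  refine ⟨π * ((R + 2) / 2) ^ 2, fun ε hε hε₁ => ⟨?_, ?_⟩⟩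
  · exact modulus_chimFam_le inter_subset_right inter_subset_right hR h₁ h₂ hε hε₁
  · rw [chimFam_comm]
    exact modulus_chimFam_le inter_subset_right inter_subset_right hR h₃ h₄ hε hε₁

/-- Lemma: if `I, J ⊂ ∂C` are disjoint arcs of prime ends with `mod Γ_{I,J} < ∞`, then
`mod Γᵋ_{I₋,J₊}` and `mod Γᵋ_{I₊,J₋}` are bounded for `ε ∈ (0,1]`. -/
theorem chimney_modulus_opposite_bounded (I J : Set ℂ)
    (hI : IsChimneyArc I) (hJ : IsChimneyArc J) (hdisj : Disjoint I J)
    (hfin : modulus (connecting I J chimney) ≠ ⊤) :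
    ∃ M : ℝ, ∀ ε : ℝ, 0 < ε → ε ≤ 1 →
      modulus (chimFam ε (I ∩ Cminus) (J ∩ Cplus)) ≤ ENNReal.ofReal M ∧
      modulus (chimFam ε (I ∩ Cplus) (J ∩ Cminus)) ≤ ENNReal.ofReal M :=
  chimney_modulus_opposite_bounded_general I J hI hJ hfin

end
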